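/- Let M, A be weight sequences. Then A ⊂ M (i.e., A_p ≤ C H^p M_p for some C, H > 0 and all p) if and only if there exist C', H' > 0 with ω_M(t) ≤ ω_A(H' t) + log C' for all t ≥ 0, where ω_M, ω_A are the associated functions. -/

import Mathlib

open Real Set Filter

/-- A weight sequence: positive, log-convex, with `M_p^{1/p} → ∞`. -/
def IsWeightSeq (M : ℕ → ℝ) : Prop :=
  (∀ p, 0 < M p) ∧
  (∀ p : ℕ, 1 ≤ p → (M p) ^ 2 ≤ M (p - 1) * M (p + 1)) ∧
  Filter.Tendsto (fun p : ℕ => (M p) ^ ((1 : ℝ) / p)) Filter.atTop Filter.atTop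

/-- The associated function `ω_M(t) = sup_p log (t^p M₀ / M_p)`. -/
noncomputable def assocFun (M : ℕ → ℝ) (t : ℝ) : ℝ :=
  ⨆ p : ℕ, Real.log (t ^ p * M 0 / M p)

/-- The quotient sequence `m_p = M_{p+1}/M_p`. -/
noncomputable def mseq (M : ℕ → ℝ) (p : ℕ) : ℝ := M (p + 1) / M p

/-- The counting function `m(x) = #{p ≥ 1 : m_p ≤ x}` of the sequence `(m_p)`. -/
noncomputable def cntFun (M : ℕ → ℝ) (x : ℝ) : ℝ :=
  (Nat.card {p : ℕ // 1 ≤ p ∧ mseq M p ≤ x} : ℝ)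

/-! For `A_p ≤ C H^p M_p`, each term `t^p M_0 / M_p` of the supremum `ω_M(t)` is at most
`C M_0 / A_0` times the term `(H t)^p A_0 / A_p` of `ω_A(H t)`. Conversely, log-convexity of `A`
makes the supremum `ω_A(m_p)` at `m_p = A_{p+1} / A_p` attained at the index `p`; evaluating the
estimate at `t = m_p / H'` and comparing with the `p`-th term of `ω_M(t)` gives
`A_p ≤ (C' A_0 / M_0) H'^p M_p` once the common factor `m_p^p` cancels. -/

-- Every term is `log 1` or `log 0`, and `Real.log 0 = 0`.
theorem assocFun_zero (M : ℕ → ℝ) : assocFun M 0 = 0 := by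
  have h : ∀ p : ℕ, Real.log ((0:ℝ) ^ p * M 0 / M p) = 0 := by
    rintro (_ | p) <;> simp
  simp [assocFun, h]

section

variable {M A : ℕ → ℝ}

theorem eventually_pow_le_of_tendsto (hpos : ∀ p, 0 < M p)
    (htend : Tendsto (fun p : ℕ => M p ^ ((1 : ℝ) / p)) atTop atTop) {t : ℝ} (ht : 0 ≤ t) :
    ∀ᶠ p in atTop, t ^ p ≤ M p := by
  filter_upwards [htend.eventually_ge_atTop t, eventually_ge_atTop 1] with p hp hp1
  calc t ^ p ≤ (M p ^ ((1 : ℝ) / p)) ^ p := pow_le_pow_left₀ ht hp p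
    _ = M p := by rw [one_div, rpow_inv_natCast_pow (hpos p).le (by omega)]

theorem bddAbove_range_log_assocFun (hpos : ∀ p, 0 < M p)
    (htend : Tendsto (fun p : ℕ => M p ^ ((1 : ℝ) / p)) atTop atTop) {t : ℝ} (ht : 0 < t) :
    BddAbove (range fun p : ℕ => Real.log (t ^ p * M 0 / M p)) := by
  refine (isBoundedUnder_of_eventually_le (a := Real.log (M 0)) ?_).bddAbove_range
  filter_upwards [eventually_pow_le_of_tendsto hpos htend ht.le] with p hp
  have := hpos 0
  have := hpos p
  refine log_le_log (by positivity) ?_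
  rw [div_le_iff₀ (hpos p), mul_comm]
  gcongr

theorem log_le_assocFun (hpos : ∀ p, 0 < M p)
    (htend : Tendsto (fun p : ℕ => M p ^ ((1 : ℝ) / p)) atTop atTop) {t : ℝ} (ht : 0 < t)
    (p : ℕ) : Real.log (t ^ p * M 0 / M p) ≤ assocFun M t :=
  le_ciSup (bddAbove_range_log_assocFun hpos htend ht) p

theorem assocFun_le_of_forall_le (hMpos : ∀ p, 0 < M p) (hApos : ∀ p, 0 < A p)
    (hAtend : Tendsto (fun p : ℕ => A p ^ ((1 : ℝ) / p)) atTop atTop) {t s c : ℝ}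
    (ht : 0 < t) (hs : 0 < s) (hc : 0 < c)
    (h : ∀ p, t ^ p * M 0 / M p ≤ c * (s ^ p * A 0 / A p)) :
    assocFun M t ≤ assocFun A s + Real.log c := by
  refine ciSup_le fun p => ?_
  have := hMpos 0
  have := hApos 0
  calc Real.log (t ^ p * M 0 / M p) ≤ Real.log (c * (s ^ p * A 0 / A p)) :=
        log_le_log (by have := hMpos p; positivity) (h p)
    _ = Real.log (s ^ p * A 0 / A p) + Real.log c := by
        rw [log_mul hc.ne' (by have := hApos p; positivity), add_comm]
    _ ≤ assocFun A s + Real.log c := by gcongr; exact log_le_assocFun hApos hAtend hs p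

theorem mseq_monotone (hpos : ∀ p, 0 < A p)
    (hconv : ∀ p : ℕ, 1 ≤ p → A p ^ 2 ≤ A (p - 1) * A (p + 1)) : Monotone (mseq A) := by
  refine monotone_nat_of_le_succ fun q => ?_
  have h := hconv (q + 1) (by omega)
  rw [Nat.add_sub_cancel] at h
  rw [mseq, mseq, div_le_div_iff₀ (hpos q) (hpos (q + 1))]
  nlinarith

theorem pow_div_le_pow_succ_div_iff (hpos : ∀ p, 0 < A p) {s : ℝ} (hs : 0 < s) (q : ℕ) :
    s ^ q / A q ≤ s ^ (q + 1) / A (q + 1) ↔ mseq A q ≤ s := by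
  rw [div_le_div_iff₀ (hpos q) (hpos (q + 1)), pow_succ, mul_assoc,
    mul_le_mul_iff_right₀ (pow_pos hs q), mseq, div_le_iff₀ (hpos q), mul_comm]

theorem pow_succ_div_le_pow_div_iff (hpos : ∀ p, 0 < A p) {s : ℝ} (hs : 0 < s) (q : ℕ) :
    s ^ (q + 1) / A (q + 1) ≤ s ^ q / A q ↔ s ≤ mseq A q := by
  rw [div_le_div_iff₀ (hpos (q + 1)) (hpos q), pow_succ, mul_assoc,
    mul_le_mul_iff_right₀ (pow_pos hs q), mseq, le_div_iff₀ (hpos q), mul_comm]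

-- `q ↦ s^q / A q` increases while `m_q ≤ s` and decreases afterwards.
theorem pow_div_le_mseq_pow_div (hpos : ∀ p, 0 < A p) (hmono : Monotone (mseq A)) (p q : ℕ) :
    mseq A p ^ q / A q ≤ mseq A p ^ p / A p := by
  have hs : 0 < mseq A p := div_pos (hpos _) (hpos _)
  rcases le_total q p with hqp | hpq
  · refine monotoneOn_of_le_succ (f := fun q => mseq A p ^ q / A q) ordConnected_Iic
      (fun n _ _ hn => ?_) hqp self_mem_Iic hqp
    rw [Order.succ_eq_add_one] at hn ⊢
    exact (pow_div_le_pow_succ_div_iff hpos hs n).2 (hmono (by simp at hn; omega))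
  · refine antitoneOn_nat_Ici_of_succ_le (f := fun q => mseq A p ^ q / A q) (fun n hn => ?_)
      self_mem_Ici hpq hpq
    exact (pow_succ_div_le_pow_div_iff hpos hs n).2 (hmono hn)

theorem assocFun_mseq_le (hpos : ∀ p, 0 < A p) (hmono : Monotone (mseq A)) (p : ℕ) :
    assocFun A (mseq A p) ≤ Real.log (mseq A p ^ p * A 0 / A p) := by
  have hs : 0 < mseq A p := div_pos (hpos _) (hpos _)
  refine ciSup_le fun q => log_le_log (by have := hpos 0; have := hpos q; positivity) ?_
  rw [mul_div_right_comm, mul_div_right_comm _ (A 0)]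
  exact mul_le_mul_of_nonneg_right (pow_div_le_mseq_pow_div hpos hmono p q) (hpos 0).le

theorem assocFun_le_of_le_mul_pow (hMpos : ∀ p, 0 < M p) (hApos : ∀ p, 0 < A p)
    (hAtend : Tendsto (fun p : ℕ => A p ^ ((1 : ℝ) / p)) atTop atTop) {C H : ℝ}
    (hC : 0 < C) (hH : 0 < H) (h : ∀ p, A p ≤ C * H ^ p * M p) {t : ℝ} (ht : 0 ≤ t) :
    assocFun M t ≤ assocFun A (H * t) + Real.log (C * M 0 / A 0) := by
  have := hMpos 0
  have := hApos 0
  rcases ht.eq_or_lt with rfl | ht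
  · rw [mul_zero, assocFun_zero, assocFun_zero, zero_add]
    exact log_nonneg ((one_le_div₀ (hApos 0)).2 (by simpa using h 0))
  refine assocFun_le_of_forall_le hMpos hApos hAtend ht (by positivity) (by positivity)
    fun p => ?_
  have := hMpos p
  have := hApos p
  rw [div_le_iff₀ (hMpos p)]
  field_simp
  calc t ^ p * A p ≤ t ^ p * (C * H ^ p * M p) := by gcongr; exact h p
    _ = C * (H * t) ^ p * M p := by ring

theorem le_mul_pow_of_assocFun_le (hMpos : ∀ p, 0 < M p)
    (hMtend : Tendsto (fun p : ℕ => M p ^ ((1 : ℝ) / p)) atTop atTop) (hApos : ∀ p, 0 < A p)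
    (hmono : Monotone (mseq A)) {C H : ℝ} (hC : 0 < C) (hH : 0 < H)
    (h : ∀ t ≥ 0, assocFun M t ≤ assocFun A (H * t) + Real.log C) (p : ℕ) :
    A p ≤ C * A 0 / M 0 * H ^ p * M p := by
  set s := mseq A p
  have hs : 0 < s := div_pos (hApos _) (hApos _)
  have := hMpos 0
  have := hApos 0
  have := hMpos p
  have := hApos p
  have key : (s / H) ^ p * M 0 / M p ≤ C * (s ^ p * A 0 / A p) := by
    rw [← log_le_log_iff (by positivity) (by positivity), log_mul hC.ne' (by positivity),
      add_comm]
    calc Real.log ((s / H) ^ p * M 0 / M p) ≤ assocFun M (s / H) :=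
          log_le_assocFun hMpos hMtend (by positivity) p
      _ ≤ assocFun A (H * (s / H)) + Real.log C := h _ (by positivity)
      _ = assocFun A s + Real.log C := by rw [mul_div_cancel₀ _ hH.ne']
      _ ≤ Real.log (s ^ p * A 0 / A p) + Real.log C := by
          gcongr; exact assocFun_mseq_le hApos hmono p
  rw [div_pow] at key
  field_simp at key ⊢
  exact key

end

/-- `A ⊂ M` (i.e. `A_p ≤ C H^p M_p`) iff `ω_M(t) ≤ ω_A(H' t) + log C'` for some
`C', H' > 0` and all `t ≥ 0`. -/
theorem subset_iff_assocFun_estimate (M A : ℕ → ℝ)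
    (hM : IsWeightSeq M) (hA : IsWeightSeq A) :
    (∃ C H : ℝ, 0 < C ∧ 0 < H ∧ ∀ p : ℕ, A p ≤ C * H ^ p * M p) ↔
    (∃ C' H' : ℝ, 0 < C' ∧ 0 < H' ∧ ∀ t ≥ (0:ℝ),
      assocFun M t ≤ assocFun A (H' * t) + Real.log C') := by
  obtain ⟨hMpos, -, hMtend⟩ := hM
  obtain ⟨hApos, hAconv, hAtend⟩ := hA
  have := hMpos 0
  have := hApos 0
  constructor
  · rintro ⟨C, H, hC, hH, h⟩
    exact ⟨C * M 0 / A 0, H, by positivity, hH,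
      fun t ht => assocFun_le_of_le_mul_pow hMpos hApos hAtend hC hH h ht⟩
  · rintro ⟨C, H, hC, hH, h⟩
    exact ⟨C * A 0 / M 0, H, by positivity, hH,
      le_mul_pow_of_assocFun_le hMpos hMtend hApos (mseq_monotone hApos hAconv) hC hH h⟩
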